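/- For every prime p, integers ε, and integers n, k ≥ 0 with 2k < p, the sequence u(n) = ∑_{j=0}^n (-1)^{εj} C(n,j)^2 satisfies u(pn + k) ≡ u(n) u(k) (mod p). (This is the case a=2, b=0 of the Chamberland–Dilcher family.) -/

import Mathlib

def u (ε : ℤ) (n : ℕ) : ℤ :=
  ∑ j ∈ Finset.range (n + 1), (((-1 : ℤˣ) ^ (ε * (j : ℤ)) : ℤˣ) : ℤ) * (n.choose j) ^ 2

open Finset

private lemma sum_range_mul_aux {M : Type*} [AddCommMonoid M] (p : ℕ) (f : ℕ → M) :
    ∀ m, ∑ j ∈ range (p * m), f j = ∑ q ∈ range m, ∑ r ∈ range p, f (p * q + r)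
  | 0 => by simp
  | m + 1 => by
    rw [Nat.mul_succ, Finset.sum_range_add, sum_range_mul_aux p f m, Finset.sum_range_succ]

theorem stmt_11 (p : ℕ) (hp : p.Prime) (ε : ℤ) (n k : ℕ) (hk : 2 * k < p) :
    u ε (p * n + k) ≡ u ε n * u ε k [ZMOD (p : ℤ)] := by
  haveI : Fact p.Prime := ⟨hp⟩
  have hp0 : 0 < p := hp.pos
  have hkp : k < p := by omega
  rw [← ZMod.intCast_eq_intCast_iff]
  set c : ZMod p := ((((-1 : ℤˣ) ^ ε : ℤˣ) : ℤ) : ZMod p) with hc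
  -- rewrite the sign terms
  have hsign : ∀ j : ℕ, ((((-1 : ℤˣ) ^ (ε * (j : ℤ)) : ℤˣ) : ℤ) : ZMod p) = c ^ j := by
    intro j
    rw [zpow_mul, zpow_natCast, Units.val_pow_eq_pow_val, Int.cast_pow]
  have hcp : c ^ p = c := ZMod.pow_card c
  -- Lucas
  have lucas : ∀ j : ℕ, ((Nat.choose (p * n + k) j : ZMod p)) =
      (Nat.choose n (j / p) : ZMod p) * (Nat.choose k (j % p) : ZMod p) := by
    intro j
    have h := Choose.choose_modEq_choose_mod_mul_choose_div (p := p) (n := p * n + k) (k := j)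
    rw [Nat.mul_add_mod, Nat.mod_eq_of_lt hkp, Nat.mul_add_div hp0,
      Nat.div_eq_of_lt hkp, add_zero] at h
    have h2 := (ZMod.intCast_eq_intCast_iff _ _ _).mpr h
    push_cast at h2
    rw [h2, mul_comm]
  unfold u
  push_cast
  simp only [hsign]
  calc
    ∑ j ∈ range (p * n + k + 1), c ^ j * ((p * n + k).choose j : ZMod p) ^ 2
      = ∑ j ∈ range (p * n + k + 1),
          c ^ j * ((n.choose (j / p) : ZMod p) * (k.choose (j % p) : ZMod p)) ^ 2 := by
        refine Finset.sum_congr rfl fun j _ => by rw [lucas j]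
    _ = ∑ j ∈ range (p * (n + 1)),
          c ^ j * ((n.choose (j / p) : ZMod p) * (k.choose (j % p) : ZMod p)) ^ 2 := by
        refine Finset.sum_subset ?_ ?_
        · intro x hx
          simp only [mem_range, Nat.mul_succ] at hx ⊢
          omega
        · intro j hj hj'
          simp only [mem_range, Nat.mul_succ] at hj hj'
          have hdiv : j / p = n :=
            Nat.div_eq_of_lt_le (by rw [mul_comm]; omega) (by rw [mul_comm, Nat.mul_succ]; omega)
          have hmod : k < j % p := by
            have := Nat.mod_add_div j p
            rw [hdiv] at this
            omega
          rw [Nat.choose_eq_zero_of_lt hmod]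
          push_cast
          ring
    _ = ∑ q ∈ range (n + 1), ∑ r ∈ range p,
          c ^ (p * q + r) *
            ((n.choose ((p * q + r) / p) : ZMod p) * (k.choose ((p * q + r) % p) : ZMod p)) ^ 2 :=
        sum_range_mul_aux p _ (n + 1)
    _ = ∑ q ∈ range (n + 1), ∑ r ∈ range p,
          (c ^ q * (n.choose q : ZMod p) ^ 2) * (c ^ r * (k.choose r : ZMod p) ^ 2) := by
        refine Finset.sum_congr rfl fun q _ => Finset.sum_congr rfl fun r hr => ?_
        simp only [mem_range] at hr
        rw [Nat.mul_add_div hp0, Nat.div_eq_of_lt hr, add_zero,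
          Nat.mul_add_mod, Nat.mod_eq_of_lt hr, pow_add, pow_mul, hcp]
        ring
    _ = (∑ q ∈ range (n + 1), c ^ q * (n.choose q : ZMod p) ^ 2) *
          (∑ r ∈ range p, c ^ r * (k.choose r : ZMod p) ^ 2) := by
        rw [Finset.sum_mul_sum]
    _ = (∑ q ∈ range (n + 1), c ^ q * (n.choose q : ZMod p) ^ 2) *
          (∑ r ∈ range (k + 1), c ^ r * (k.choose r : ZMod p) ^ 2) := by
        congr 1
        refine (Finset.sum_subset ?_ ?_).symm
        · intro x hx
          simp only [mem_range] at hx ⊢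
          omega
        · intro r hr hr'
          simp only [mem_range] at hr hr'
          rw [Nat.choose_eq_zero_of_lt (by omega)]
          push_cast
          ring
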